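/- Let k ≥ 0 and let n be an integer with 2^k ≤ n ≤ 2^{k+1} − 1. Then 2^{2^k − 1} divides A^2_n. -/

import Mathlib

/-- The descent set of a permutation `π` of `{1,…,n}` (realized as `Equiv.Perm (Fin n)`),
as a subset of `[n-1] = {1,…,n-1}`: those positions `i` with `π_i > π_{i+1}`. -/
def descSet (n : ℕ) (π : Equiv.Perm (Fin n)) : Finset ℕ :=
  (Finset.Icc 1 (n - 1)).filter fun i =>
    ∀ (h1 : i - 1 < n) (h2 : i < n), π ⟨i, h2⟩ < π ⟨i - 1, h1⟩

/-- The descent set statistic `β_n(S)`: the number of permutations of `{1,…,n}`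
with descent set exactly `S`. -/
def descStat (n : ℕ) (S : Finset ℕ) : ℕ :=
  (Finset.univ.filter fun π : Equiv.Perm (Fin n) => descSet n π = S).card

/-- `A^r_n = Σ_{S ⊆ [n-1]} β_n(S)^r`. -/
def powSumDes (r n : ℕ) : ℕ :=
  ∑ S ∈ (Finset.Icc 1 (n - 1)).powerset, descStat n S ^ r

/-! Write `α(T)` for the number of permutations whose descent set lies in `T`. Then
`α(T) = ∑_{S ⊆ T} β(S)`, so by Möbius inversion `(-1)^|S| β(S) = ∑_{T ⊆ S} (-1)^|T| α(T)`, and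
squaring and summing over `S ⊆ [n-1]` gives
`A²_n = ∑_{T, T'} 2^(n-1-|T ∪ T'|) (-1)^(|T|+|T'|) α(T) α(T')`.
A permutation has its descents in `T` iff it increases on each of the `|T| + 1` blocks into which
`T` cuts `{0, …, n-1}`, so `α(T)` is a multinomial coefficient and Legendre's formula gives
`v₂(α(T)) ≥ |T| + 1 - s₂(n)`, where `s₂` is the binary digit sum. For `2^k ≤ n < 2^(k+1)` one has
`2 s₂(n) + 2^k ≤ n + 3`; this makes every term divisible by `2^(2^k-2)` and every diagonal term
by `2^(2^k-1)`, while the off-diagonal terms come in equal pairs. -/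

open Finset Equiv

section BooleanLattice

variable {α R : Type*} [DecidableEq α]

theorem sum_powerset_neg_one_pow_card_mul_sum_powerset [CommRing R] (f : Finset α → R)
    (S : Finset α) :
    ∑ T ∈ S.powerset, (-1) ^ #T * ∑ U ∈ T.powerset, f U = (-1) ^ #S * f S := by
  induction S using Finset.induction_on generalizing f with
  | empty => simp
  | insert a S ha ih =>
    have hinsert : ∀ T ∈ S.powerset,
        (-1 : R) ^ #(insert a T) * ∑ U ∈ (insert a T).powerset, f U =
          -((-1) ^ #T * ∑ U ∈ T.powerset, f U) - (-1) ^ #T * ∑ U ∈ T.powerset, f (insert a U) := by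
      intro T hT
      have haT : a ∉ T := fun h => ha (mem_powerset.1 hT h)
      rw [card_insert_of_notMem haT, sum_powerset_insert haT, pow_succ]
      ring
    rw [sum_powerset_insert ha, sum_congr rfl hinsert, sum_sub_distrib, sum_neg_distrib,
      ih (fun U => f (insert a U)), card_insert_of_notMem ha, pow_succ]
    ring

theorem sum_powerset_sq_sum_powerset [CommSemiring R] (N : Finset α) (a : Finset α → R) :
    ∑ S ∈ N.powerset, (∑ T ∈ S.powerset, a T) ^ 2 =
      ∑ T ∈ N.powerset, ∑ T' ∈ N.powerset, 2 ^ (#N - #(T ∪ T')) * (a T * a T') := by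
  simp_rw [sq, sum_mul_sum, ← sum_product']
  rw [sum_comm' (t' := N.powerset ×ˢ N.powerset) (s' := fun p => Icc (p.1 ∪ p.2) N)]
  · refine sum_congr rfl fun p hp => ?_
    obtain ⟨h1, h2⟩ := mem_product.1 hp
    rw [sum_const, card_Icc_finset (union_subset (mem_powerset.1 h1) (mem_powerset.1 h2)),
      nsmul_eq_mul]
    push_cast
    rfl
  · intro S p
    simp only [mem_powerset, mem_product, Finset.mem_Icc, union_subset_iff]
    constructor
    · rintro ⟨hS, h1, h2⟩
      exact ⟨⟨⟨h1, h2⟩, hS⟩, h1.trans hS, h2.trans hS⟩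
    · rintro ⟨⟨⟨h1, h2⟩, hS⟩, -⟩
      exact ⟨hS, h1, h2⟩

end BooleanLattice

theorem dvd_sum_sum_of_symm {ι R : Type*} [CommSemiring R] {s : Finset ι} {f : ι → ι → R} {d : R}
    (hsymm : ∀ i j, f i j = f j i) (hdiag : ∀ i ∈ s, d ∣ f i i)
    (hoff : ∀ i ∈ s, ∀ j ∈ s, d ∣ 2 * f i j) : d ∣ ∑ i ∈ s, ∑ j ∈ s, f i j := by
  classical
  induction s using Finset.induction_on with
  | empty => simp
  | insert a s ha ih =>
    have hsplit : ∑ i ∈ insert a s, ∑ j ∈ insert a s, f i j =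
        f a a + ∑ j ∈ s, 2 * f a j + ∑ i ∈ s, ∑ j ∈ s, f i j := by
      simp only [sum_insert ha, sum_add_distrib, two_mul, hsymm _ a]
      ring
    rw [hsplit]
    refine dvd_add (dvd_add (hdiag a (mem_insert_self a s)) (dvd_sum fun j hj => ?_)) ?_
    · exact hoff a (mem_insert_self a s) j (mem_insert_of_mem hj)
    · exact ih (fun i hi => hdiag i (mem_insert_of_mem hi))
        (fun i hi j hj => hoff i (mem_insert_of_mem hi) j (mem_insert_of_mem hj))

theorem sub_one_mul_padicValNat_of_mul_prod_factorial {p : ℕ} [hp : Fact p.Prime] {ι : Type*}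
    (s : Finset ι) (b : ι → ℕ) {a : ℕ}
    (h : a * ∏ i ∈ s, (b i).factorial = (∑ i ∈ s, b i).factorial) :
    (p - 1) * padicValNat p a = ∑ i ∈ s, (p.digits (b i)).sum - (p.digits (∑ i ∈ s, b i)).sum := by
  have ha : a ≠ 0 := by
    rintro rfl
    exact Nat.factorial_ne_zero _ (by simpa using h.symm)
  have hfac : ∀ i ∈ s, (b i).factorial ≠ 0 := fun i _ => Nat.factorial_ne_zero _
  have hval := congrArg (fun m => (p - 1) * m.factorization p) h
  simp only [Nat.factorization_mul ha (prod_ne_zero_iff.2 hfac), Nat.factorization_prod hfac,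
    Finsupp.add_apply, Finsupp.coe_finsetSum, Finset.sum_apply, Nat.factorization_def _ hp.out,
    mul_add, mul_sum, sub_one_mul_padicValNat_factorial] at hval
  rw [sum_tsub_distrib s fun i _ => Nat.digit_sum_le p (b i)] at hval
  have hle := sum_le_sum fun i (_ : i ∈ s) => Nat.digit_sum_le p (b i)
  have := Nat.digit_sum_le p (∑ i ∈ s, b i)
  omega

theorem two_mul_sum_digits_two_le (r : ℕ) : 2 * (Nat.digits 2 r).sum ≤ r + 1 := by
  induction r using Nat.strong_induction_on with
  | _ r ih =>
    rcases Nat.eq_zero_or_pos r with rfl | hr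
    · simp
    rw [Nat.digits_def' (by norm_num) hr, List.sum_cons]
    have := ih (r / 2) (by omega)
    rcases Nat.eq_zero_or_pos (r / 2) with h | h
    · rw [h, Nat.digits_zero, List.sum_nil] at this ⊢
      omega
    · omega

theorem sum_digits_two_add_two_pow {k r : ℕ} (hr : r < 2 ^ k) :
    (Nat.digits 2 (r + 2 ^ k)).sum = (Nat.digits 2 r).sum + 1 := by
  have hlen : (Nat.digits 2 r).length ≤ k := (Nat.digits_length_le_iff (by norm_num) r).2 hr
  have := Nat.digits_append_zeroes_append_digits (b := 2) (k := k - (Nat.digits 2 r).length)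
    (m := 1) (n := r) (by norm_num) (by norm_num)
  rw [Nat.add_sub_cancel' hlen, mul_one] at this
  rw [← this]
  simp

theorem two_mul_sum_digits_two_add_two_pow_le {k n : ℕ} (h1 : 2 ^ k ≤ n) (h2 : n < 2 ^ (k + 1)) :
    2 * (Nat.digits 2 n).sum + 2 ^ k ≤ n + 3 := by
  obtain ⟨r, rfl⟩ := Nat.exists_eq_add_of_le' h1
  rw [sum_digits_two_add_two_pow (by rw [pow_succ] at h2; omega)]
  have := two_mul_sum_digits_two_le r
  omega

theorem sum_digits_pos {b m : ℕ} (hm : m ≠ 0) : 0 < (Nat.digits b m).sum := by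
  have hne : Nat.digits b m ≠ [] := Nat.digits_ne_nil_iff_ne_zero.2 hm
  exact Nat.pos_of_ne_zero (Nat.getLast_digit_ne_zero b hm) |>.trans_le
    (List.le_sum_of_mem (List.getLast_mem hne))

section LexSort

variable {n : ℕ} {α : Type*} [LinearOrder α] {B : Fin n → α}

theorem comp_sort_lex_eq (hB : Monotone B) (π : Perm (Fin n)) :
    B ∘ Tuple.sort (fun x => toLex (B x, π x)) = B :=
  Tuple.unique_monotone (τ := Equiv.refl _)
    (fun _ _ hxy => Prod.Lex.monotone_fst _ _ (Tuple.monotone_sort (fun x => toLex (B x, π x)) hxy))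
    hB

theorem strictMono_lex_mul_sort (hB : Monotone B) (π : Perm (Fin n)) :
    StrictMono fun x => toLex (B x, (π * Tuple.sort fun y => toLex (B y, π y)) x) := by
  have hBτ : ∀ x, B (Tuple.sort (fun y => toLex (B y, π y)) x) = B x :=
    congrFun (comp_sort_lex_eq hB π)
  refine Monotone.strictMono_of_injective (fun x y hxy => ?_)
    fun x y h => (π * _).injective (congrArg (fun p => (ofLex p).2) h)
  simpa only [Function.comp_apply, Perm.mul_apply, hBτ] using
    Tuple.monotone_sort (fun y => toLex (B y, π y)) hxy

theorem sort_lex_mul_eq_inv {σ g : Perm (Fin n)} (hσ : StrictMono fun x => toLex (B x, σ x))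
    (hg : B ∘ g = B) : Tuple.sort (fun x => toLex (B x, (σ * g) x)) = g⁻¹ := by
  refine (Tuple.eq_sort_iff.2
    ⟨fun x y hxy => ?_, fun i j hij h => absurd (σ.injective ?_) hij.ne⟩).symm
  · have hginv : ∀ x, B (g.symm x) = B x := congrFun ((comp_symm_eq g B B).2 hg.symm)
    simpa [hginv] using hσ.monotone hxy
  · simpa using congrArg (fun p => (ofLex p).2) h

/-- Every permutation factors uniquely as `σ * g` with `σ` increasing on the fibres of `B` and `g`
preserving `B`; `g⁻¹` is the permutation sorting `x ↦ (B x, π x)`. -/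
theorem card_strictMono_lex_mul_card_stabilizer (hB : Monotone B) :
    Nat.card {σ : Perm (Fin n) // StrictMono fun x => toLex (B x, σ x)} *
      Nat.card {g : Perm (Fin n) // B ∘ g = B} = n.factorial := by
  let e : Perm (Fin n) ≃ {σ : Perm (Fin n) // StrictMono fun x => toLex (B x, σ x)} ×
      {g : Perm (Fin n) // B ∘ g = B} :=
    { toFun := fun π =>
        (⟨_, strictMono_lex_mul_sort hB π⟩,
          ⟨(Tuple.sort fun y => toLex (B y, π y))⁻¹,
            (comp_symm_eq _ B B).2 (comp_sort_lex_eq hB π).symm⟩)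
      invFun := fun p => p.1.1 * p.2.1
      left_inv := fun π => by simp
      right_inv := fun ⟨⟨σ, hσ⟩, ⟨g, hg⟩⟩ => by
        simp only [sort_lex_mul_eq_inv hσ hg, inv_inv, mul_inv_cancel_right] }
  rw [← Nat.card_prod, ← Nat.card_congr e, Nat.card_perm, Nat.card_eq_fintype_card,
    Fintype.card_fin]

end LexSort

/-- The index of the block containing `x` when `ℕ` is cut into blocks starting at the elements
of `T`. -/
def blockIdx (T : Finset ℕ) (x : ℕ) : ℕ := #{t ∈ T | t ≤ x}

theorem blockIdx_mono (T : Finset ℕ) : Monotone (blockIdx T) := fun _ _ hxy =>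
  card_le_card (monotone_filter_right T fun _ _ h => h.trans hxy)

theorem blockIdx_succ (T : Finset ℕ) (x : ℕ) :
    blockIdx T (x + 1) = blockIdx T x + if x + 1 ∈ T then 1 else 0 := by
  unfold blockIdx
  split_ifs with h
  · rw [← card_insert_of_notMem (s := {t ∈ T | t ≤ x}) (a := x + 1) (by simp)]
    congr 1
    ext t
    simp only [mem_filter, mem_insert]
    constructor
    · rintro ⟨ht, hle⟩
      rcases Nat.le_succ_iff.1 hle with hle | rfl
      exacts [Or.inr ⟨ht, hle⟩, Or.inl rfl]
    · rintro (rfl | ⟨ht, hle⟩)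
      exacts [⟨h, le_rfl⟩, ⟨ht, hle.trans (Nat.le_succ x)⟩]
  · rw [add_zero]
    congr 1
    ext t
    simp only [mem_filter, and_congr_right_iff]
    intro ht
    exact ⟨fun hle => (Nat.le_succ_iff.1 hle).resolve_right (by rintro rfl; exact h ht),
      fun hle => hle.trans (Nat.le_succ x)⟩

theorem blockIdx_lt_of_mem {T : Finset ℕ} {x t : ℕ} (hxt : x < t) (ht : t ∈ T) :
    blockIdx T x < blockIdx T t := by
  refine card_lt_card ⟨monotone_filter_right T fun _ _ h => h.trans hxt.le, fun hsub => ?_⟩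
  have := (mem_filter.1 (hsub (mem_filter.2 ⟨ht, le_rfl⟩))).2
  omega

theorem descSet_subset_iff {m : ℕ} (π : Perm (Fin (m + 1))) (T : Finset ℕ) :
    descSet (m + 1) π ⊆ T ↔ ∀ i : Fin m, π i.succ < π i.castSucc → (i : ℕ) + 1 ∈ T := by
  constructor
  · intro h i hi
    apply h
    simp only [descSet, mem_filter, Finset.mem_Icc]
    refine ⟨⟨by omega, by omega⟩, fun _ _ => ?_⟩
    convert hi using 2 <;> ext <;> simp
  · intro h j hj
    simp only [descSet, mem_filter, Finset.mem_Icc] at hj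
    obtain ⟨⟨hj1, hjm⟩, hlt⟩ := hj
    obtain ⟨i, rfl⟩ := Nat.exists_eq_add_of_le' hj1
    exact h ⟨i, by omega⟩ (by convert hlt (by omega) (by omega) using 2 <;> ext <;> simp)

theorem descSet_subset_iff_strictMono {n : ℕ} (π : Perm (Fin n)) (T : Finset ℕ) :
    descSet n π ⊆ T ↔ StrictMono fun x : Fin n => toLex (blockIdx T x, π x) := by
  cases n with
  | zero => exact iff_of_true (by simp [descSet]) fun x => x.elim0
  | succ m =>
    rw [descSet_subset_iff, Fin.strictMono_iff_lt_succ]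
    refine forall_congr' fun i => ?_
    simp only [Fin.val_castSucc, Fin.val_succ, blockIdx_succ, Prod.Lex.toLex_lt_toLex]
    have hne : π i.succ ≠ π i.castSucc := π.injective.ne (Fin.castSucc_lt_succ (i := i)).ne'
    split_ifs with hi
    · simp [hi]
    · simp only [add_zero, lt_self_iff_false, true_and, false_or, hi, imp_false, not_lt]
      exact ⟨fun h => lt_of_le_of_ne h hne.symm, le_of_lt⟩

def descSubsetStat (n : ℕ) (T : Finset ℕ) : ℕ :=
  #{π : Perm (Fin n) | descSet n π ⊆ T}

theorem descSubsetStat_eq_sum_descStat (n : ℕ) (T : Finset ℕ) :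
    descSubsetStat n T = ∑ S ∈ T.powerset, descStat n S := by
  rw [descSubsetStat, card_eq_sum_card_fiberwise fun π hπ => mem_powerset.2 (mem_filter.1 hπ).2]
  refine sum_congr rfl fun S hS => ?_
  rw [descStat, filter_filter]
  congr 1
  exact filter_congr fun π _ => and_iff_right_of_imp fun h => h ▸ mem_powerset.1 hS

theorem descSubsetStat_mul_prod_factorial (n : ℕ) (T : Finset ℕ) :
    descSubsetStat n T * ∏ i ∈ univ.image (fun x : Fin n => blockIdx T x),
      (Fintype.card {x : Fin n // blockIdx T x = i}).factorial = n.factorial := by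
  have hB : Monotone fun x : Fin n => blockIdx T x :=
    (blockIdx_mono T).comp Fin.val_strictMono.monotone
  have hasc : Nat.card {σ : Perm (Fin n) // StrictMono fun x : Fin n => toLex (blockIdx T x, σ x)} =
      descSubsetStat n T := by
    rw [descSubsetStat, ← Fintype.card_subtype, ← Nat.card_eq_fintype_card]
    exact Nat.card_congr (subtypeEquivRight fun π => (descSet_subset_iff_strictMono π T).symm)
  rw [← card_strictMono_lex_mul_card_stabilizer hB, hasc, Nat.card_eq_fintype_card,
    DomMulAct.stabilizer_card']

theorem card_le_card_image_blockIdx {n : ℕ} (hn : 0 < n) {T : Finset ℕ} (hT : T ⊆ Icc 1 (n - 1)) :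
    #T + 1 ≤ #(univ.image fun x : Fin n => blockIdx T x) := by
  have hlt : ∀ t ∈ insert 0 T, t < n := by
    simp only [mem_insert, forall_eq_or_imp]
    exact ⟨hn, fun t ht => by have := mem_Icc.1 (hT ht); omega⟩
  have hmono : StrictMonoOn (blockIdx T) ↑(insert 0 T) := by
    intro a _ b hb hab
    refine blockIdx_lt_of_mem hab ((mem_insert.1 (mem_coe.1 hb)).resolve_left ?_)
    omega
  rw [← card_insert_of_notMem (s := T) (a := 0) fun h => by simpa using hT h]
  refine card_le_card_of_injOn (blockIdx T) (fun t ht => ?_) hmono.injOn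
  exact mem_image.2 ⟨⟨t, hlt t ht⟩, mem_univ _, rfl⟩

theorem two_pow_dvd_descSubsetStat {n : ℕ} (hn : 0 < n) {T : Finset ℕ} (hT : T ⊆ Icc 1 (n - 1)) :
    2 ^ (#T + 1 - (Nat.digits 2 n).sum) ∣ descSubsetStat n T := by
  have hcard := card_le_card_image_blockIdx hn hT
  set B := fun x : Fin n => blockIdx T x
  set b := fun i => Fintype.card {x : Fin n // B x = i}
  have hsum : ∑ i ∈ univ.image B, b i = n := by
    simp only [b, Fintype.card_subtype, ← card_eq_sum_card_image, card_univ, Fintype.card_fin]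
  have hval := sub_one_mul_padicValNat_of_mul_prod_factorial (p := 2) _ b
    (by rw [hsum]; exact descSubsetStat_mul_prod_factorial n T)
  have hdigits : #(univ.image B) ≤ ∑ i ∈ univ.image B, (Nat.digits 2 (b i)).sum := by
    rw [card_eq_sum_ones]
    refine sum_le_sum fun i hi => sum_digits_pos ?_
    obtain ⟨x, -, rfl⟩ := mem_image.1 hi
    exact (Fintype.card_pos_iff.2 ⟨(⟨x, rfl⟩ : {y // B y = B x})⟩).ne'
  rw [hsum] at hval
  exact (pow_dvd_pow 2 (by omega)).trans pow_padicValNat_dvd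

theorem powSumDes_two_eq (n : ℕ) :
    (powSumDes 2 n : ℤ) = ∑ T ∈ (Icc 1 (n - 1)).powerset, ∑ T' ∈ (Icc 1 (n - 1)).powerset,
      2 ^ (n - 1 - #(T ∪ T')) *
        ((-1) ^ #T * (descSubsetStat n T : ℤ) * ((-1) ^ #T' * (descSubsetStat n T' : ℤ))) := by
  have hsq : ∀ S, (descStat n S : ℤ) ^ 2 =
      (∑ T ∈ S.powerset, (-1) ^ #T * (descSubsetStat n T : ℤ)) ^ 2 := by
    intro S
    simp only [descSubsetStat_eq_sum_descStat, Nat.cast_sum]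
    rw [sum_powerset_neg_one_pow_card_mul_sum_powerset (fun U => (descStat n U : ℤ)), mul_pow,
      ← pow_mul, mul_comm #S, pow_mul, neg_one_sq, one_pow, one_mul]
  rw [powSumDes, Nat.cast_sum]
  simp only [Nat.cast_pow, hsq]
  rw [sum_powerset_sq_sum_powerset, Nat.card_Icc, Nat.add_sub_cancel]

theorem two_pow_dvd_powSumDes_two_term {n : ℕ} (hn : 0 < n) {T T' : Finset ℕ}
    (hT : T ⊆ Icc 1 (n - 1)) (hT' : T' ⊆ Icc 1 (n - 1)) :
    (2 : ℤ) ^ (n - 1 - #(T ∪ T') + (#T + 1 - (Nat.digits 2 n).sum) +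
        (#T' + 1 - (Nat.digits 2 n).sum)) ∣
      2 ^ (n - 1 - #(T ∪ T')) *
        ((-1) ^ #T * (descSubsetStat n T : ℤ) * ((-1) ^ #T' * (descSubsetStat n T' : ℤ))) := by
  have hdvd : ∀ {U}, U ⊆ Icc 1 (n - 1) →
      (2 : ℤ) ^ (#U + 1 - (Nat.digits 2 n).sum) ∣ (-1) ^ #U * (descSubsetStat n U : ℤ) :=
    fun hU => Dvd.dvd.mul_left (by exact_mod_cast two_pow_dvd_descSubsetStat hn hU) _
  rw [pow_add, pow_add, mul_assoc]
  exact mul_dvd_mul_left _ (mul_dvd_mul (hdvd hT) (hdvd hT'))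

theorem stmt18 (k n : ℕ) (h1 : 2 ^ k ≤ n) (h2 : n ≤ 2 ^ (k + 1) - 1) :
    2 ^ (2 ^ k - 1) ∣ powSumDes 2 n := by
  have hn : 0 < n := (Nat.two_pow_pos k).trans_le h1
  have hs := two_mul_sum_digits_two_add_two_pow_le h1 (by have := Nat.two_pow_pos (k + 1); omega)
  have hcard : ∀ {U}, U ∈ (Icc 1 (n - 1)).powerset → #U ≤ n - 1 := fun hU =>
    (card_le_card (mem_powerset.1 hU)).trans_eq (by simp)
  rw [← Int.natCast_dvd_natCast, powSumDes_two_eq]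
  push_cast
  refine dvd_sum_sum_of_symm (fun T T' => by rw [union_comm]; ring) (fun T hT => ?_)
    (fun T hT T' hT' => ?_)
  · have hterm := two_pow_dvd_powSumDes_two_term hn (mem_powerset.1 hT) (mem_powerset.1 hT)
    rw [union_self] at hterm ⊢
    have hTcard := hcard hT
    exact (pow_dvd_pow 2 (by omega)).trans hterm
  · have hterm := mul_dvd_mul_left 2
      (two_pow_dvd_powSumDes_two_term hn (mem_powerset.1 hT) (mem_powerset.1 hT'))
    rw [← pow_succ'] at hterm
    have hTcard := hcard hT
    have hT'card := hcard hT'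
    have hunion := card_union_le T T'
    have hunion' := hcard (mem_powerset.2 (union_subset (mem_powerset.1 hT) (mem_powerset.1 hT')))
    exact (pow_dvd_pow 2 (by omega)).trans hterm
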